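/- Let Γ be a simplicial graph, 𝒢 a collection of nontrivial groups indexed by V(Γ), and w = s₁⋯sₙ a word over ⋃ G_u of length n ≥ 2 that is not graphically reduced. Then w can be rewritten as a word of length n−1 representing the same element of Γ𝒢: either by deleting a trivial syllable, or by merging two syllables sᵢ, sⱼ (i < j) lying in a common vertex-group G such that every intermediate syllable s_k (i < k < j) lies in a vertex-group adjacent to G, replacing them by the single syllable sᵢsⱼ. -/

import Mathlib

open Monoid

def graphProductRels {V : Type*} (Γ : SimpleGraph V) (G : V → Type*) [∀ v, Group (G v)] :
    Set (Monoid.CoprodI G) :=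
  {x | ∃ (u v : V) (g : G u) (h : G v), Γ.Adj u v ∧
    x = CoprodI.of g * CoprodI.of h * (CoprodI.of g)⁻¹ * (CoprodI.of h)⁻¹}

def GraphProduct {V : Type*} (Γ : SimpleGraph V) (G : V → Type*) [∀ v, Group (G v)] : Type _ :=
  Monoid.CoprodI G ⧸ Subgroup.normalClosure (graphProductRels Γ G)

instance {V : Type*} (Γ : SimpleGraph V) (G : V → Type*) [∀ v, Group (G v)] :
    Group (GraphProduct Γ G) := by
  unfold GraphProduct; infer_instance

/-- The canonical map from a vertex group to the graph product. -/
def GraphProduct.of {V : Type*} (Γ : SimpleGraph V) (G : V → Type*) [∀ v, Group (G v)] {u : V} :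
    G u →* GraphProduct Γ G :=
  (QuotientGroup.mk' (Subgroup.normalClosure (graphProductRels Γ G))).comp CoprodI.of

/-- The element of the graph product represented by a word over the union of vertex groups. -/
def wordProd {V : Type*} (Γ : SimpleGraph V) (G : V → Type*) [∀ v, Group (G v)]
    (l : List (Σ u, G u)) : GraphProduct Γ G :=
  (l.map fun s => GraphProduct.of Γ G s.2).prod

/-- A word over the union of the vertex groups is graphically reduced if all its syllables
are nontrivial and any two syllables in the same vertex group are separated by a syllable
in a non-adjacent vertex group. -/
def GraphicallyReduced {V : Type*} (Γ : SimpleGraph V) (G : V → Type*) [∀ v, Group (G v)]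
    (l : List (Σ u, G u)) : Prop :=
  (∀ s ∈ l, s.2 ≠ (1 : G s.1)) ∧
  ∀ (i j : ℕ) (hi : i < l.length) (hj : j < l.length), i < j →
    (l.get ⟨i, hi⟩).1 = (l.get ⟨j, hj⟩).1 →
    ∃ (k : ℕ) (hk : k < l.length), i < k ∧ k < j ∧
      ¬ Γ.Adj (l.get ⟨i, hi⟩).1 (l.get ⟨k, hk⟩).1

/-- Swapping two consecutive syllables lying in adjacent vertex groups. -/
def AdjSwap {V : Type*} (Γ : SimpleGraph V) (G : V → Type*) [∀ v, Group (G v)]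
    (l l' : List (Σ u, G u)) : Prop :=
  ∃ (w₁ w₂ : List (Σ u, G u)) (s t : Σ u, G u), Γ.Adj s.1 t.1 ∧
    l = w₁ ++ s :: t :: w₂ ∧ l' = w₁ ++ t :: s :: w₂


section Aux

variable {V : Type*} (Γ : SimpleGraph V) (G : V → Type*) [∀ v, Group (G v)]

lemma wordProd_append (a b : List (Σ u, G u)) :
    wordProd Γ G (a ++ b) = wordProd Γ G a * wordProd Γ G b := by
  simp [wordProd]

lemma wordProd_cons (s : Σ u, G u) (a : List (Σ u, G u)) :
    wordProd Γ G (s :: a) = GraphProduct.of Γ G s.2 * wordProd Γ G a := by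
  simp [wordProd]

lemma GraphProduct.of_comm {u v : V} (hadj : Γ.Adj u v) (g : G u) (h : G v) :
    GraphProduct.of Γ G g * GraphProduct.of Γ G h
      = GraphProduct.of Γ G h * GraphProduct.of Γ G g := by
  have hmem : CoprodI.of g * CoprodI.of h * (CoprodI.of g)⁻¹ * (CoprodI.of h)⁻¹ ∈
      Subgroup.normalClosure (graphProductRels Γ G) :=
    Subgroup.subset_normalClosure ⟨u, v, g, h, hadj, rfl⟩
  have h1 : (QuotientGroup.mk' (Subgroup.normalClosure (graphProductRels Γ G))
      (CoprodI.of g * CoprodI.of h * (CoprodI.of g)⁻¹ * (CoprodI.of h)⁻¹)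
        : GraphProduct Γ G) = 1 := (QuotientGroup.eq_one_iff _).mpr hmem
  simp only [map_mul, map_inv] at h1
  have h2 : GraphProduct.of Γ G g * GraphProduct.of Γ G h *
      (GraphProduct.of Γ G g)⁻¹ * (GraphProduct.of Γ G h)⁻¹ = 1 := h1
  calc GraphProduct.of Γ G g * GraphProduct.of Γ G h
      = (GraphProduct.of Γ G g * GraphProduct.of Γ G h * (GraphProduct.of Γ G g)⁻¹ *
          (GraphProduct.of Γ G h)⁻¹) * (GraphProduct.of Γ G h * GraphProduct.of Γ G g) := by
        group
    _ = GraphProduct.of Γ G h * GraphProduct.of Γ G g := by rw [h2, one_mul]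

lemma wordProd_comm {u : V} (w : List (Σ u, G u)) (hadj : ∀ t ∈ w, Γ.Adj u t.1) (g : G u) :
    GraphProduct.of Γ G g * wordProd Γ G w = wordProd Γ G w * GraphProduct.of Γ G g := by
  induction w with
  | nil => simp [wordProd]
  | cons a w ih =>
    have ha : Γ.Adj u a.1 := hadj a (List.mem_cons_self (a := a) (l := w))
    have ih' := ih (fun t ht => hadj t (List.mem_cons_of_mem a ht))
    rw [wordProd_cons, ← mul_assoc, GraphProduct.of_comm Γ G ha, mul_assoc, ih',
      ← mul_assoc]

lemma exists_split {α : Type*} (l : List α) (i j : ℕ) (hi : i < l.length)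
    (hj : j < l.length) (hij : i < j) :
    ∃ w₁ w₂ w₃ : List α, l = w₁ ++ l.get ⟨i, hi⟩ :: (w₂ ++ l.get ⟨j, hj⟩ :: w₃) ∧
      w₁.length = i ∧ w₂.length + i + 1 = j ∧
      ∀ x ∈ w₂, ∃ (k : ℕ) (hk : k < l.length), i < k ∧ k < j ∧ x = l.get ⟨k, hk⟩ := by
  refine ⟨l.take i, (l.drop (i+1)).take (j - (i+1)), l.drop (j+1), ?_, ?_, ?_, ?_⟩
  · have h1 : l.drop i = l.get ⟨i, hi⟩ :: l.drop (i+1) := by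
      rw [List.drop_eq_getElem_cons hi]; simp
    have h2 : l.drop (i+1) =
        (l.drop (i+1)).take (j - (i+1)) ++ (l.drop (i+1)).drop (j - (i+1)) :=
      (List.take_append_drop _ _).symm
    have h3 : (l.drop (i+1)).drop (j - (i+1)) = l.drop j := by
      rw [List.drop_drop]; congr 1; omega
    have h4 : l.drop j = l.get ⟨j, hj⟩ :: l.drop (j+1) := by
      rw [List.drop_eq_getElem_cons hj]; simp
    have h5 : l.drop (i+1) =
        (l.drop (i+1)).take (j - (i+1)) ++ (l.get ⟨j, hj⟩ :: l.drop (j+1)) := by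
      rw [← h4, ← h3]; exact h2
    conv_lhs => rw [← List.take_append_drop i l, h1, h5]
  · simp [List.length_take]; omega
  · simp [List.length_take, List.length_drop]; omega
  · intro x hx
    rw [List.mem_iff_getElem] at hx
    obtain ⟨m, hm, hxm⟩ := hx
    have hm' : m < j - (i+1) := by
      have := hm
      simp [List.length_take, List.length_drop] at this
      omega
    refine ⟨i + 1 + m, by omega, by omega, by omega, ?_⟩
    rw [← hxm]
    rw [List.getElem_take, List.getElem_drop]
    simp

end Aux

/-- A word of length at least two which is not graphically reduced can be shortened by one
syllable without changing the element it represents: either delete a trivial syllable, or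
merge two syllables of a common vertex group all of whose intermediate syllables lie in
adjacent vertex groups. -/
theorem shorten_non_graphically_reduced {V : Type*} (Γ : SimpleGraph V)
    (G : V → Type*) [∀ v, Group (G v)] [∀ v, Nontrivial (G v)]
    (l : List (Σ u, G u)) (hn : 2 ≤ l.length) (h : ¬ GraphicallyReduced Γ G l) :
    ∃ l' : List (Σ u, G u),
      wordProd Γ G l' = wordProd Γ G l ∧ l'.length + 1 = l.length ∧
      ((∃ (w₁ w₂ : List (Σ u, G u)) (s : Σ u, G u),
          s.2 = (1 : G s.1) ∧ l = w₁ ++ s :: w₂ ∧ l' = w₁ ++ w₂) ∨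
       (∃ (w₁ w₂ w₃ : List (Σ u, G u)) (u : V) (g h' : G u),
          (∀ t ∈ w₂, Γ.Adj u t.1) ∧
          l = w₁ ++ ⟨u, g⟩ :: (w₂ ++ ⟨u, h'⟩ :: w₃) ∧
          l' = w₁ ++ ⟨u, g * h'⟩ :: (w₂ ++ w₃))) := by
  by_cases htriv : ∀ s ∈ l, s.2 ≠ (1 : G s.1)
  · have hB : ¬ ∀ (i j : ℕ) (hi : i < l.length) (hj : j < l.length), i < j →
        (l.get ⟨i, hi⟩).1 = (l.get ⟨j, hj⟩).1 →
        ∃ (k : ℕ) (hk : k < l.length), i < k ∧ k < j ∧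
          ¬ Γ.Adj (l.get ⟨i, hi⟩).1 (l.get ⟨k, hk⟩).1 := fun hB => h ⟨htriv, hB⟩
    push_neg at hB
    obtain ⟨i, j, hi, hj, hij, heq, hall⟩ := hB
    obtain ⟨w₁, w₂, w₃, hl, hlen₁, hlen₂, hmem⟩ := exists_split l i j hi hj hij
    have hadj₂ : ∀ x ∈ w₂, Γ.Adj (l.get ⟨i, hi⟩).1 x.1 := by
      intro x hx
      obtain ⟨k, hk, hik, hkj, rfl⟩ := hmem x hx
      exact hall k hk hik hkj
    set s := l.get ⟨i, hi⟩ with hs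
    set t := l.get ⟨j, hj⟩ with ht
    clear_value s t
    clear hs ht hall hmem htriv h
    obtain ⟨u, g⟩ := s
    obtain ⟨v, h'⟩ := t
    obtain rfl : u = v := heq
    refine ⟨w₁ ++ ⟨u, g * h'⟩ :: (w₂ ++ w₃), ?_, ?_, Or.inr ⟨w₁, w₂, w₃, u, g, h',
      hadj₂, hl, rfl⟩⟩
    · rw [hl]
      simp only [wordProd_append, wordProd_cons, map_mul]
      have hc := wordProd_comm Γ G w₂ hadj₂ h'
      calc wordProd Γ G w₁ * (GraphProduct.of Γ G g * GraphProduct.of Γ G h' *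
            (wordProd Γ G w₂ * wordProd Γ G w₃))
          = wordProd Γ G w₁ * (GraphProduct.of Γ G g * ((GraphProduct.of Γ G h' *
            wordProd Γ G w₂) * wordProd Γ G w₃)) := by group
        _ = wordProd Γ G w₁ * (GraphProduct.of Γ G g * ((wordProd Γ G w₂ *
            GraphProduct.of Γ G h') * wordProd Γ G w₃)) := by rw [hc]
        _ = wordProd Γ G w₁ * (GraphProduct.of Γ G g * (wordProd Γ G w₂ *
            (GraphProduct.of Γ G h' * wordProd Γ G w₃))) := by group
    · rw [hl]; simp; omega
  · push_neg at htriv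
    obtain ⟨s, hsl, hs1⟩ := htriv
    obtain ⟨w₁, w₂, hl⟩ := List.append_of_mem hsl
    refine ⟨w₁ ++ w₂, ?_, ?_, Or.inl ⟨w₁, w₂, s, hs1, hl, rfl⟩⟩
    · rw [hl, wordProd_append, wordProd_append, wordProd_cons, hs1, map_one, one_mul]
    · rw [hl]; simp; omega
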